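/- Let K be a field and m ≥ 1. The tropicalization map trop : K[[t_1,…,t_m]] → P(ℤ_{≥0}^m), trop(φ) = Vert(Supp(φ)), is multiplicative: for all φ, ψ ∈ K[[t_1,…,t_m]], trop(φ·ψ) = trop(φ) ⊙ trop(ψ). Moreover trop(0) = ∅ and trop(1) = trop(−1) = {(0,…,0)}. -/

import Mathlib

open Pointwise

noncomputable section

/-- The embedding of `ℤ_{≥0}^m` into `ℝ^m`. -/
def emb {m : ℕ} (x : Fin m →₀ ℕ) : Fin m → ℝ := fun i => (x i : ℝ)

/-- The Newton polygon of `X ⊆ ℤ_{≥0}^m`: the convex hull (in `ℝ^m`) of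
`X + ℤ_{≥0}^m`. -/
def newton {m : ℕ} (X : Set (Fin m →₀ ℕ)) : Set (Fin m → ℝ) :=
  convexHull ℝ (emb '' (X + (Set.univ : Set (Fin m →₀ ℕ))))

/-- The vertex set of `X`: the elements `x ∈ X` with `x ∉ N(X \ {x})`. -/
def vert {m : ℕ} (X : Set (Fin m →₀ ℕ)) : Set (Fin m →₀ ℕ) :=
  {x ∈ X | emb x ∉ newton (X \ {x})}

variable {K : Type} [Field K]

/-- The support of a multivariate formal power series. -/
def supp {m : ℕ} (φ : MvPowerSeries (Fin m) K) : Set (Fin m →₀ ℕ) :=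
  {L | MvPowerSeries.coeff L φ ≠ 0}

/-- The tropicalization of a multivariate formal power series: the vertex set of
its support. -/
def trop {m : ℕ} (φ : MvPowerSeries (Fin m) K) : Set (Fin m →₀ ℕ) :=
  vert (supp φ)

/-- Tropical product of supports (via Minkowski sum). -/
def odot {m : ℕ} (S T : Set (Fin m →₀ ℕ)) : Set (Fin m →₀ ℕ) := vert (S + T)

/-!
The Newton polygon of `X` is the upper hull `conv X + ℝ_{≥0}^m`, and it equals the Newton polygon
of `vert X`: by Dickson's lemma one may pass to the finitely many minimal elements of `X`, and from
a finite set the non-vertices can be removed one at a time by an exchange argument. Consequently a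
set squeezed between `vert X` and `X` has the same vertices as `X`. The squeeze applies twice: a
vertex of a Minkowski sum decomposes uniquely, so the coefficient of `φ * ψ` there is a single
nonzero product, giving `vert (supp φ + supp ψ) ⊆ supp (φ * ψ) ⊆ supp φ + supp ψ`; and a vertex
of `S + T` is a sum of vertices, giving `vert (S + T) ⊆ vert S + vert T ⊆ S + T`.
-/

open Set

theorem add_Ici_zero {G : Type*} [AddCommGroup G] [PartialOrder G] [IsOrderedAddMonoid G]
    (s : Set G) : s + Ici (0 : G) = upperClosure s := by
  ext p
  simp only [mem_add, mem_Ici, SetLike.mem_coe, mem_upperClosure]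
  constructor
  · rintro ⟨q, hq, w, hw, rfl⟩
    exact ⟨q, hq, le_add_of_nonneg_right hw⟩
  · rintro ⟨q, hq, hqp⟩
    exact ⟨q, hq, p - q, sub_nonneg.2 hqp, add_sub_cancel q p⟩

section UpperHull

variable {E : Type*} [AddCommGroup E] [PartialOrder E] [Module ℝ E]

def upperHull (s : Set E) : Set E := upperClosure (convexHull ℝ s)

theorem mem_upperHull {s : Set E} {p : E} :
    p ∈ upperHull s ↔ ∃ q ∈ convexHull ℝ s, q ≤ p :=
  mem_upperClosure

theorem convexHull_subset_upperHull (s : Set E) : convexHull ℝ s ⊆ upperHull s :=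
  fun p hp => mem_upperHull.2 ⟨p, hp, le_rfl⟩

theorem upperHull_mono {s t : Set E} (h : s ⊆ t) : upperHull s ⊆ upperHull t :=
  fun _ hp =>
    let ⟨q, hq, hqp⟩ := mem_upperHull.1 hp
    mem_upperHull.2 ⟨q, convexHull_mono h hq, hqp⟩

theorem upperHull_singleton (q : E) : upperHull {q} = Ici q := by
  rw [upperHull, convexHull_singleton, upperClosure_singleton, UpperSet.coe_Ici]

theorem mem_upperHull_union {s t : Set E} (hs : s.Nonempty) (ht : t.Nonempty) {p : E} :
    p ∈ upperHull (s ∪ t) ↔ ∃ x ∈ convexHull ℝ s, ∃ y ∈ convexHull ℝ t, ∃ a b : ℝ,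
      0 ≤ a ∧ 0 ≤ b ∧ a + b = 1 ∧ a • x + b • y ≤ p := by
  simp only [mem_upperHull, convexHull_union hs ht, mem_convexJoin, segment]
  constructor
  · rintro ⟨_, ⟨x, hx, y, hy, a, b, ha, hb, hab, rfl⟩, hp⟩
    exact ⟨x, hx, y, hy, a, b, ha, hb, hab, hp⟩
  · rintro ⟨x, hx, y, hy, a, b, ha, hb, hab, hp⟩
    exact ⟨_, ⟨x, hx, y, hy, a, b, ha, hb, hab, rfl⟩, hp⟩

theorem mem_upperHull_insert {s : Set E} (hs : s.Nonempty) {p q : E} :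
    p ∈ upperHull (insert q s) ↔ ∃ z ∈ convexHull ℝ s, ∃ a b : ℝ,
      0 ≤ a ∧ 0 ≤ b ∧ a + b = 1 ∧ a • q + b • z ≤ p := by
  rw [insert_eq, mem_upperHull_union (singleton_nonempty q) hs]
  simp only [convexHull_singleton, mem_singleton_iff, exists_eq_left]

variable [IsOrderedAddMonoid E] [PosSMulStrictMono ℝ E]

theorem convex_upperHull (s : Set E) : Convex ℝ (upperHull s) := by
  intro x hx y hy a b ha hb hab
  obtain ⟨x', hx', hxx'⟩ := mem_upperHull.1 hx
  obtain ⟨y', hy', hyy'⟩ := mem_upperHull.1 hy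
  exact mem_upperHull.2 ⟨a • x' + b • y', convex_convexHull ℝ s hx' hy' ha hb hab,
    add_le_add (smul_le_smul_of_nonneg_left hxx' ha) (smul_le_smul_of_nonneg_left hyy' hb)⟩

theorem upperHull_subset_upperHull {s t : Set E} (h : s ⊆ upperHull t) :
    upperHull s ⊆ upperHull t := by
  intro p hp
  obtain ⟨q, hq, hqp⟩ := mem_upperHull.1 hp
  obtain ⟨r, hr, hrq⟩ := mem_upperHull.1 (convexHull_min h (convex_upperHull t) hq)
  exact mem_upperHull.2 ⟨r, hr, hrq.trans hqp⟩

theorem mem_upperHull_of_exchange {D : Set E} {p q : E} (hpq : p ≠ q)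
    (hp : p ∈ upperHull (insert q D)) (hq : q ∈ upperHull (insert p D)) : p ∈ upperHull D := by
  rcases D.eq_empty_or_nonempty with rfl | hD
  · simp only [insert_empty_eq, upperHull_singleton, mem_Ici] at hp hq
    exact absurd (le_antisymm hq hp) hpq
  obtain ⟨z, hz, a, b, ha, hb, hab, hp⟩ := (mem_upperHull_insert hD).1 hp
  obtain ⟨w, hw, c, d, hc, hd, hcd, hq⟩ := (mem_upperHull_insert hD).1 hq
  -- substituting the bound on `q` into the bound on `p`
  have key : (a * d) • w + b • z ≤ (1 - a * c) • p := by
    have : (1 - a * c) • p - ((a * d) • w + b • z) =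
        (p - (a • q + b • z)) + a • (q - (c • p + d • w)) := by module
    rw [← sub_nonneg, this]
    exact add_nonneg (sub_nonneg.2 hp) (smul_nonneg ha (sub_nonneg.2 hq))
  have hweights : a * d + b = 1 - a * c := by linear_combination a * hcd + hab
  rcases (mul_le_one₀ (by linarith) hc (by linarith) : a * c ≤ 1).eq_or_lt with hac | hac
  · obtain rfl : a = 1 := by nlinarith
    obtain rfl : c = 1 := by nlinarith
    obtain rfl : b = 0 := by linarith
    obtain rfl : d = 0 := by linarith
    simp only [one_smul, zero_smul, add_zero] at hp hq
    exact absurd (le_antisymm hp hq) hpq.symm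
  have hpos : 0 < 1 - a * c := by linarith
  refine mem_upperHull.2 ⟨((a * d) / (1 - a * c)) • w + (b / (1 - a * c)) • z,
    convex_convexHull ℝ D hw hz (by positivity) (by positivity) (by field_simp; linarith), ?_⟩
  refine (smul_le_smul_iff_of_pos_left hpos).1 ?_
  rwa [smul_add, smul_smul, smul_smul, mul_div_cancel₀ _ hpos.ne', mul_div_cancel₀ _ hpos.ne']

theorem mem_upperHull_of_mem_upperHull_union_of_lt {s t : Set E} {p : E}
    (ht : t ⊆ Ioi p) (hp : p ∈ upperHull (s ∪ t)) : p ∈ upperHull s := by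
  have hconv : convexHull ℝ t ⊆ Ioi p := convexHull_min ht (convex_Ioi p)
  rcases s.eq_empty_or_nonempty with rfl | hs
  · rw [empty_union, mem_upperHull] at hp
    obtain ⟨y, hy, hyp⟩ := hp
    exact absurd hyp (not_le_of_gt (hconv hy))
  rcases t.eq_empty_or_nonempty with rfl | ht'
  · rwa [union_empty] at hp
  obtain ⟨x, hx, y, hy, a, b, ha, hb, hab, hp⟩ := (mem_upperHull_union hs ht').1 hp
  rcases ha.eq_or_lt with rfl | ha
  · obtain rfl : b = 1 := by linarith
    rw [zero_smul, zero_add, one_smul] at hp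
    exact absurd hp (not_le_of_gt (hconv hy))
  have hax : a • x ≤ a • p :=
    calc a • x ≤ p - b • y := le_sub_iff_add_le.2 hp
      _ ≤ p - b • p := sub_le_sub_left (smul_le_smul_of_nonneg_left (hconv hy).le hb) p
      _ = a • p := by rw [← sub_eq_of_eq_add' hab.symm]; module
  exact mem_upperHull.2 ⟨x, hx, (smul_le_smul_iff_of_pos_left ha).1 hax⟩

end UpperHull

section Newton

variable {m : ℕ}

theorem emb_add (x y : Fin m →₀ ℕ) : emb (x + y) = emb x + emb y := by
  funext i
  simp [emb]

theorem image_emb_add (X Y : Set (Fin m →₀ ℕ)) : emb '' (X + Y) = emb '' X + emb '' Y :=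
  image_add (AddMonoidHom.mk' emb emb_add)

theorem emb_le_emb {x y : Fin m →₀ ℕ} : emb x ≤ emb y ↔ x ≤ y := by
  simp [Pi.le_def, Finsupp.le_def, emb]

theorem emb_injective : Function.Injective (emb (m := m)) :=
  fun _ _ h => le_antisymm (emb_le_emb.1 h.le) (emb_le_emb.1 h.ge)

theorem emb_strictMono : StrictMono (emb (m := m)) :=
  fun _ _ h => lt_of_le_of_ne (emb_le_emb.2 h.le) (emb_injective.ne h.ne)

theorem range_emb : range (emb (m := m)) = univ.pi fun _ => range ((↑) : ℕ → ℝ) := by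
  ext p
  simp only [mem_range, mem_pi, mem_univ, true_implies]
  constructor
  · rintro ⟨x, rfl⟩ i
    exact ⟨x i, rfl⟩
  · intro h
    choose n hn using h
    exact ⟨Finsupp.equivFunOnFinite.symm n, funext fun i => by simp [emb, hn]⟩

theorem convexHull_range_natCast : convexHull ℝ (range ((↑) : ℕ → ℝ)) = Ici 0 := by
  refine (convexHull_min ?_ (convex_Ici (𝕜 := ℝ) (0 : ℝ))).antisymm fun t ht => ?_
  · rintro _ ⟨n, rfl⟩
    exact (Nat.cast_nonneg n : (0 : ℝ) ≤ n)
  · have : t ∈ segment ℝ ((0 : ℕ) : ℝ) (⌈t⌉₊ : ℝ) := by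
      rw [Nat.cast_zero, segment_eq_Icc (Nat.cast_nonneg _)]
      exact ⟨ht, Nat.le_ceil t⟩
    exact segment_subset_convexHull (mem_range_self _) (mem_range_self _) this

theorem convexHull_range_emb : convexHull ℝ (range (emb (m := m))) = Ici 0 := by
  rw [range_emb, convexHull_pi, convexHull_range_natCast, pi_univ_Ici]
  rfl

theorem newton_eq_upperHull (X : Set (Fin m →₀ ℕ)) : newton X = upperHull (emb '' X) := by
  rw [newton, image_emb_add, image_univ, convexHull_add, convexHull_range_emb, add_Ici_zero]
  rfl

theorem newton_add (X Y : Set (Fin m →₀ ℕ)) : newton (X + Y) = newton X + newton Y := by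
  rw [newton, newton, newton, ← convexHull_add, ← image_emb_add, add_add_add_comm, univ_add_univ]

theorem newton_mono {X Y : Set (Fin m →₀ ℕ)} (h : X ⊆ Y) : newton X ⊆ newton Y := by
  simpa only [newton_eq_upperHull] using upperHull_mono (image_mono h)

theorem emb_mem_newton_of_le {X : Set (Fin m →₀ ℕ)} {x y : Fin m →₀ ℕ} (hy : y ∈ X)
    (hyx : y ≤ x) : emb x ∈ newton X := by
  rw [newton_eq_upperHull, mem_upperHull]
  exact ⟨emb y, subset_convexHull ℝ _ (mem_image_of_mem emb hy), emb_le_emb.2 hyx⟩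

theorem newton_subset_newton {X Y : Set (Fin m →₀ ℕ)} (h : ∀ x ∈ X, emb x ∈ newton Y) :
    newton X ⊆ newton Y := by
  simp only [newton_eq_upperHull] at h ⊢
  exact upperHull_subset_upperHull (forall_mem_image.2 h)

theorem newton_empty : newton (∅ : Set (Fin m →₀ ℕ)) = ∅ := by
  rw [newton_eq_upperHull, image_empty, upperHull, convexHull_empty, upperClosure_empty]
  rfl

theorem emb_mem_newton_of_exchange {D : Set (Fin m →₀ ℕ)} {x y : Fin m →₀ ℕ} (hxy : x ≠ y)
    (hx : emb x ∈ newton (insert y D)) (hy : emb y ∈ newton (insert x D)) :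
    emb x ∈ newton D := by
  simp only [newton_eq_upperHull, image_insert_eq] at hx hy ⊢
  exact mem_upperHull_of_exchange (emb_injective.ne hxy) hx hy

theorem emb_mem_newton_of_union_Ioi {A : Set (Fin m →₀ ℕ)} {x : Fin m →₀ ℕ}
    (hx : emb x ∈ newton (A ∪ Ioi x)) : emb x ∈ newton A := by
  rw [newton_eq_upperHull, image_union] at hx
  rw [newton_eq_upperHull]
  exact mem_upperHull_of_mem_upperHull_union_of_lt
    (image_subset_iff.2 fun _ hy => emb_strictMono hy) hx

end Newton

section Vertices

variable {m : ℕ}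

theorem vert_subset (X : Set (Fin m →₀ ℕ)) : vert X ⊆ X := fun _ hx => hx.1

theorem vert_empty : vert (∅ : Set (Fin m →₀ ℕ)) = ∅ :=
  subset_empty_iff.1 (vert_subset ∅)

theorem vert_singleton (x : Fin m →₀ ℕ) : vert {x} = {x} := by
  refine (vert_subset {x}).antisymm ?_
  rintro _ rfl
  refine ⟨rfl, ?_⟩
  rw [sdiff_self, newton_empty]
  exact notMem_empty _

theorem emb_mem_newton_sdiff_of_notMem_vert {X : Set (Fin m →₀ ℕ)} {x : Fin m →₀ ℕ}
    (hx : x ∈ X) (hxv : x ∉ vert X) : emb x ∈ newton (X \ {x}) :=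
  not_not.1 fun h => hxv ⟨hx, h⟩

theorem newton_sdiff_singleton {X : Set (Fin m →₀ ℕ)} {x : Fin m →₀ ℕ} (hx : x ∈ X)
    (hxv : x ∉ vert X) : newton (X \ {x}) = newton X := by
  refine (newton_mono sdiff_subset).antisymm (newton_subset_newton fun y hy => ?_)
  obtain rfl | hyx := eq_or_ne y x
  · exact emb_mem_newton_sdiff_of_notMem_vert hx hxv
  · exact emb_mem_newton_of_le ⟨hy, hyx⟩ le_rfl

theorem vert_sdiff_singleton {X : Set (Fin m →₀ ℕ)} {x : Fin m →₀ ℕ} (hx : x ∈ X)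
    (hxv : x ∉ vert X) : vert (X \ {x}) = vert X := by
  ext y
  constructor
  · rintro ⟨⟨hy, hyx⟩, hyv⟩
    refine ⟨hy, fun hyn => hyv ?_⟩
    have hyx : y ≠ x := hyx
    have hxn := emb_mem_newton_sdiff_of_notMem_vert hx hxv
    -- both `X \ {y}` and `X \ {x}` are `(X \ {x}) \ {y}` with one point added back
    refine emb_mem_newton_of_exchange hyx ?_ ?_
    · rwa [insert_sdiff_singleton_comm hyx.symm, insert_sdiff_singleton, insert_eq_of_mem hx]
    · rwa [insert_sdiff_singleton, insert_eq_of_mem (show y ∈ X \ {x} from ⟨hy, hyx⟩)]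
  · rintro ⟨hy, hyv⟩
    have hyx : y ≠ x := by
      rintro rfl
      exact hxv ⟨hy, hyv⟩
    exact ⟨⟨hy, hyx⟩, fun h => hyv (newton_mono (sdiff_subset_sdiff_left sdiff_subset) h)⟩

theorem newton_vert_of_finite {X : Set (Fin m →₀ ℕ)} (hX : X.Finite) :
    newton (vert X) = newton X := by
  induction hn : X.ncard using Nat.strong_induction_on generalizing X with
  | _ n ih =>
    by_cases hXv : X ⊆ vert X
    · rw [(vert_subset X).antisymm hXv]
    obtain ⟨x, hx, hxv⟩ := not_subset.1 hXv
    have hlt : (X \ {x}).ncard < n := hn ▸ ncard_sdiff_singleton_lt_of_mem hx hX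
    rw [← vert_sdiff_singleton hx hxv, ih _ hlt hX.sdiff rfl, newton_sdiff_singleton hx hxv]

theorem finite_setOf_minimal (X : Set (Fin m →₀ ℕ)) : {x | Minimal (· ∈ X) x}.Finite :=
  (setOfPred_minimal_antichain _).finite_of_partiallyWellOrderedOn
    (isPWO_of_wellQuasiOrderedLE _)

theorem newton_setOf_minimal (X : Set (Fin m →₀ ℕ)) :
    newton {x | Minimal (· ∈ X) x} = newton X := by
  refine (newton_mono (setOfPred_minimal_subset X)).antisymm
    (newton_subset_newton fun x hx => ?_)
  obtain ⟨y, hyx, hy⟩ := exists_minimal_le_of_wellFoundedLT (· ∈ X) x hx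
  exact emb_mem_newton_of_le hy hyx

theorem vert_subset_setOf_minimal (X : Set (Fin m →₀ ℕ)) : vert X ⊆ {x | Minimal (· ∈ X) x} :=
  fun _ ⟨hx, hxv⟩ => ⟨hx, fun _ hy hyx => by_contra fun hxy =>
    hxv (emb_mem_newton_of_le ⟨hy, fun h => hxy (h ▸ le_rfl)⟩ hyx)⟩

theorem vert_setOf_minimal (X : Set (Fin m →₀ ℕ)) :
    vert {x | Minimal (· ∈ X) x} = vert X := by
  ext x
  constructor
  · rintro ⟨hx, hxv⟩
    refine ⟨hx.prop, fun hxn => hxv (emb_mem_newton_of_union_Ioi ?_)⟩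
    -- every other point of `X` lies above another minimal point or strictly above `x`
    refine newton_subset_newton (X := X \ {x}) (fun y ⟨hy, hyx⟩ => ?_) hxn
    obtain ⟨z, hzy, hz⟩ := exists_minimal_le_of_wellFoundedLT (· ∈ X) y hy
    obtain rfl | hzx := eq_or_ne z x
    · exact emb_mem_newton_of_le (Or.inr (lt_of_le_of_ne hzy (Ne.symm hyx))) le_rfl
    · exact emb_mem_newton_of_le (Or.inl ⟨hz, hzx⟩) hzy
  · intro hx
    exact ⟨vert_subset_setOf_minimal X hx, fun h =>
      hx.2 (newton_mono (sdiff_subset_sdiff_left (setOfPred_minimal_subset X)) h)⟩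

theorem newton_vert (X : Set (Fin m →₀ ℕ)) : newton (vert X) = newton X := by
  rw [← vert_setOf_minimal, newton_vert_of_finite (finite_setOf_minimal X), newton_setOf_minimal]

theorem vert_eq_of_subset {X A : Set (Fin m →₀ ℕ)} (hvA : vert X ⊆ A) (hAX : A ⊆ X) :
    vert A = vert X := by
  ext x
  constructor
  · rintro ⟨hx, hxv⟩
    by_contra hxX
    have hsub : vert X ⊆ A \ {x} := fun y hy => ⟨hvA hy, by rintro rfl; exact hxX hy⟩
    refine hxv (newton_mono hsub ?_)
    rw [newton_vert]
    exact emb_mem_newton_of_le (hAX hx) le_rfl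
  · intro hx
    exact ⟨hvA hx, fun h => hx.2 (newton_mono (sdiff_subset_sdiff_left hAX) h)⟩

end Vertices

section MinkowskiSum

variable {m : ℕ}

theorem mem_vert_of_add_mem_vert {S T : Set (Fin m →₀ ℕ)} {a b : Fin m →₀ ℕ} (ha : a ∈ S)
    (hb : b ∈ T) (hab : a + b ∈ vert (S + T)) : a ∈ vert S := by
  refine ⟨ha, fun han => hab.2 ?_⟩
  have hsub : (S \ {a}) + {b} ⊆ (S + T) \ {a + b} := by
    rintro _ ⟨s, ⟨hs, hsa⟩, _, rfl, rfl⟩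
    exact ⟨add_mem_add hs hb, fun h => hsa (add_right_cancel h)⟩
  refine newton_mono hsub ?_
  rw [newton_add, emb_add]
  exact add_mem_add han (emb_mem_newton_of_le rfl le_rfl)

theorem vert_add_subset (S T : Set (Fin m →₀ ℕ)) : vert (S + T) ⊆ vert S + vert T := by
  intro v hv
  obtain ⟨a, ha, b, hb, rfl⟩ := vert_subset _ hv
  refine ⟨a, mem_vert_of_add_mem_vert ha hb hv, b, mem_vert_of_add_mem_vert hb ha ?_, rfl⟩
  rwa [add_comm b, add_comm T]

theorem vert_add_vert (S T : Set (Fin m →₀ ℕ)) : vert (vert S + vert T) = vert (S + T) :=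
  vert_eq_of_subset (vert_add_subset S T) (add_subset_add (vert_subset S) (vert_subset T))

theorem eq_of_add_eq_of_add_mem_vert {S T : Set (Fin m →₀ ℕ)} {a b a' b' : Fin m →₀ ℕ}
    (ha : a ∈ S) (hb : b ∈ T) (ha' : a' ∈ S) (hb' : b' ∈ T) (hv : a + b ∈ vert (S + T))
    (h : a' + b' = a + b) : a' = a := by
  by_contra hne
  have hb'b : b' ≠ b := fun hbb => hne (add_right_cancel (hbb ▸ h))
  have h₁ : a + b' ∈ (S + T) \ {a + b} :=
    ⟨add_mem_add ha hb', fun e => hb'b (add_left_cancel e)⟩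
  have h₂ : a' + b ∈ (S + T) \ {a + b} :=
    ⟨add_mem_add ha' hb, fun e => hne (add_right_cancel e)⟩
  have hsum : (a + b') + (a' + b) = (a + b) + (a + b) :=
    calc (a + b') + (a' + b) = (a' + b') + (a + b) := by abel
      _ = (a + b) + (a + b) := by rw [h]
  have hmid : (1 / 2 : ℝ) • emb (a + b') + (1 / 2 : ℝ) • emb (a' + b) = emb (a + b) := by
    rw [← smul_add, ← emb_add, hsum, emb_add, ← two_smul ℝ, smul_smul]
    norm_num
  refine hv.2 ?_
  rw [newton_eq_upperHull]
  exact convexHull_subset_upperHull _ (hmid ▸ convex_convexHull ℝ _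
    (subset_convexHull ℝ _ (mem_image_of_mem emb h₁))
    (subset_convexHull ℝ _ (mem_image_of_mem emb h₂)) (by norm_num) (by norm_num) (by norm_num))

end MinkowskiSum

section PowerSeries

variable {m : ℕ}

theorem supp_zero : supp (0 : MvPowerSeries (Fin m) K) = ∅ := by
  simp [supp]

theorem supp_one : supp (1 : MvPowerSeries (Fin m) K) = {0} := by
  ext L
  simp [supp, MvPowerSeries.coeff_one]

theorem supp_neg (φ : MvPowerSeries (Fin m) K) : supp (-φ) = supp φ := by
  simp [supp]

theorem supp_mul_subset (φ ψ : MvPowerSeries (Fin m) K) : supp (φ * ψ) ⊆ supp φ + supp ψ := by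
  classical
  intro L hL
  rw [supp, mem_ofPred_eq, MvPowerSeries.coeff_mul] at hL
  obtain ⟨⟨a, b⟩, hab, hne⟩ := Finset.exists_ne_zero_of_sum_ne_zero hL
  exact ⟨a, left_ne_zero_of_mul hne, b, right_ne_zero_of_mul hne,
    Finset.HasAntidiagonal.mem_antidiagonal.1 hab⟩

theorem vert_supp_add_supp_subset_supp_mul (φ ψ : MvPowerSeries (Fin m) K) :
    vert (supp φ + supp ψ) ⊆ supp (φ * ψ) := by
  classical
  intro v hv
  obtain ⟨a, ha, b, hb, rfl⟩ := mem_add.1 (vert_subset _ hv)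
  rw [supp, mem_ofPred_eq, MvPowerSeries.coeff_mul,
    Finset.sum_eq_single_of_mem (a, b) (Finset.HasAntidiagonal.mem_antidiagonal.2 rfl)]
  · exact mul_ne_zero ha hb
  rintro ⟨a', b'⟩ hab' hne
  simp only [Finset.HasAntidiagonal.mem_antidiagonal] at hab'
  by_contra hprod
  obtain rfl : a' = a := eq_of_add_eq_of_add_mem_vert ha hb (left_ne_zero_of_mul hprod)
    (right_ne_zero_of_mul hprod) hv hab'
  exact hne (by rw [add_left_cancel hab'])

theorem trop_mul (φ ψ : MvPowerSeries (Fin m) K) : trop (φ * ψ) = odot (trop φ) (trop ψ) := by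
  rw [trop, trop, trop, odot, vert_add_vert,
    vert_eq_of_subset (vert_supp_add_supp_subset_supp_mul φ ψ) (supp_mul_subset φ ψ)]

end PowerSeries

theorem trop_multiplicative_general (K : Type) [Field K] (m : ℕ) :
    (∀ φ ψ : MvPowerSeries (Fin m) K, trop (φ * ψ) = odot (trop φ) (trop ψ)) ∧
    trop (0 : MvPowerSeries (Fin m) K) = ∅ ∧
    trop (1 : MvPowerSeries (Fin m) K) = {0} ∧
    trop (-1 : MvPowerSeries (Fin m) K) = {0} := by
  refine ⟨trop_mul, ?_, ?_, ?_⟩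
  · rw [trop, supp_zero, vert_empty]
  · rw [trop, supp_one, vert_singleton]
  · rw [trop, supp_neg, supp_one, vert_singleton]

/-- The tropicalization map is multiplicative, sends `0` to `∅` and `±1` to
`{(0,…,0)}`. -/
theorem trop_multiplicative (K : Type) [Field K] (m : ℕ) (hm : 1 ≤ m) :
    (∀ φ ψ : MvPowerSeries (Fin m) K, trop (φ * ψ) = odot (trop φ) (trop ψ)) ∧
    trop (0 : MvPowerSeries (Fin m) K) = ∅ ∧
    trop (1 : MvPowerSeries (Fin m) K) = {0} ∧
    trop (-1 : MvPowerSeries (Fin m) K) = {0} :=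
  trop_multiplicative_general K m

end
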